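/- Let m, m₁ ∈ {0,…,N−1} with m > m₁, let k ∈ {0,…,C−1}, let τ = k₀·Δt for some integer k₀ with k·T_SC ≤ τ < k·T_SC + min{T_SC − t_{m₁,1}, t_{m,1}}, and set ν = 2·c̃₁·τ − k/Δt + (m − m₁)/T. Then for every i ∈ {0,…,C−k−1} and every t ∈ [t_{m₁,i} + τ, t_{m,i+k+1}), as well as for every t ∈ [t_{m₁,C−k} + τ, T), the cross-ambiguity integrand is the constant φ_m(t)·conj(φ_{m₁}(t−τ))·exp(−2πiνt) = exp(2πi·(c₂·(m² − m₁²) + (m₁/T)·τ − c̃₁·τ²)), independent of t and i; hence the cross-ambiguity function between the two chirp subcarriers has a pulse at (τ, 2·c̃₁·τ − k/Δt + δ_f), i.e., shifted along the Doppler dimension by exactly the frequency difference δ_f = (m − m₁)/T relative to the auto-ambiguity pulse locations. -/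

import Mathlib

open MeasureTheory Complex Real

noncomputable section

namespace AFDM

variable (N C : ℕ) (Δt : ℝ)

/-- Frame duration `T = N·Δt`. -/
def T : ℝ := N * Δt

/-- Chirp rate parameter `c̃₁ = C/(2·T·Δt)`. -/
def ctil : ℝ := C / (2 * T N Δt * Δt)

/-- Subchirp duration `T_SC = T/C`. -/
def TSC : ℝ := T N Δt / C

/-- Spectrum wrapping points `t_{m,q}`: `t_{m,0} = 0`, `t_{m,q} = q·T/C − m·Δt/C` for
`q = 1,…,C`, and `t_{m,C+1} = T`. -/
def tp (m q : ℕ) : ℝ :=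
  if q = 0 then 0 else if q ≤ C then q * T N Δt / C - m * Δt / C else T N Δt

/-- Wrapping index function `q_m(t)`: equals `q` on `[t_{m,q}, t_{m,q+1})` for `t ∈ [0,T)`. -/
def qm (m : ℕ) (t : ℝ) : ℤ :=
  (((Finset.range (C + 1)).filter (fun q => tp N C Δt m q ≤ t)).card : ℤ) - 1

/-- The `m`-th continuous-time AFDM chirp subcarrier with parameter `c₂`:
`φ_m(t) = exp(2πi(c₂·m² + c̃₁·t² + (m/T)·t − q_m(t)·t/Δt))` on `[0,T)`, `0` otherwise. -/
def phi (c₂ : ℝ) (m : ℕ) (t : ℝ) : ℂ :=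
  if 0 ≤ t ∧ t < T N Δt then
    Complex.exp (2 * Real.pi * Complex.I *
      ((c₂ * (m : ℝ) ^ 2 + ctil N C Δt * t ^ 2 + ((m : ℝ) / T N Δt) * t
        - (qm N C Δt m t : ℝ) * t / Δt : ℝ) : ℂ))
  else 0

/-- The aperiodic ambiguity function `A_{a,b}(τ,ν) = ∫ a(t)·conj(b(t−τ))·exp(−2πiνt) dt`. -/
def AF (a b : ℝ → ℂ) (τ ν : ℝ) : ℂ :=
  ∫ t : ℝ, a t * (starRingEnd ℂ) (b (t - τ)) *
    Complex.exp (-(2 * Real.pi * Complex.I * ((ν * t : ℝ) : ℂ)))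

/-- The integral indicator `I(c, t₁, t₂)`. -/
def Iind (c t₁ t₂ : ℝ) : ℂ :=
  if c ≠ 0 then
    (Complex.exp (2 * Real.pi * Complex.I * ((c * t₂ : ℝ) : ℂ))
      - Complex.exp (2 * Real.pi * Complex.I * ((c * t₁ : ℝ) : ℂ))) /
      (2 * Real.pi * Complex.I * ((c : ℝ) : ℂ))
  else ((t₂ - t₁ : ℝ) : ℂ)

/-! On the piece of `[0, T)` where `q_m(t) = i + k` and `q_{m₁}(t - τ) = i`, the phase of
`φ_m(t)·conj(φ_{m₁}(t − τ))·exp(−2πiνt)` is a polynomial in `t` whose quadratic terms cancel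
(both chirps have rate `c̃₁`) and whose linear term is killed by the choice of `ν`.  What is
left differs from the claimed constant by `i·τ/Δt = i·k₀ ∈ ℤ`, invisible under `exp(2πi·)`.
The bounds `k·T_SC ≤ τ` and `m₁ ≤ m` give `t_{m,i+k} ≤ t_{m₁,i} + τ`, which places `t` and
`t − τ` in the wrapping intervals `i + k` and `i` respectively. -/

variable {N C Δt}

lemma tp_zero (m : ℕ) : tp N C Δt m 0 = 0 := by simp [tp]

lemma tp_of_pos_of_le {m q : ℕ} (hq : 0 < q) (hqC : q ≤ C) :
    tp N C Δt m q = q * TSC N C Δt - m * Δt / C := by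
  simp [tp, hq.ne', hqC, TSC, mul_div_assoc]

lemma tp_succ_self (m : ℕ) : tp N C Δt m (C + 1) = T N Δt := by simp [tp]

lemma T_eq_mul_TSC (hC : C ≠ 0) : T N Δt = C * TSC N C Δt := by
  rw [TSC, mul_div_cancel₀ _ (Nat.cast_ne_zero.2 hC)]

lemma tp_one_nonneg {m : ℕ} (hm : m ≤ N) (hΔt : 0 ≤ Δt) : 0 ≤ tp N C Δt m 1 := by
  rcases Nat.eq_zero_or_pos C with rfl | hC
  · simpa [tp, T] using mul_nonneg N.cast_nonneg hΔt
  · have hmN : (m : ℝ) * Δt ≤ N * Δt := by gcongr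
    rw [tp_of_pos_of_le one_pos hC, TSC, T, Nat.cast_one, one_mul, ← sub_div]
    exact div_nonneg (sub_nonneg.2 hmN) C.cast_nonneg

lemma tp_monotoneOn {m : ℕ} (hΔt : 0 ≤ Δt) (h1 : 0 ≤ tp N C Δt m 1) :
    MonotoneOn (tp N C Δt m) (Set.Iic (C + 1)) := by
  refine monotoneOn_of_le_add_one Set.ordConnected_Iic fun q _ _ hq => ?_
  have hqC : q ≤ C := by simpa using hq
  rcases Nat.eq_zero_or_pos q with rfl | hq0
  · simpa [tp_zero] using h1
  have hC : 0 < C := hq0.trans_le hqC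
  have hshift : 0 ≤ m * Δt / C := by positivity
  have hTSC : 0 ≤ TSC N C Δt := by
    rw [tp_of_pos_of_le one_pos hC] at h1
    linarith
  rw [tp_of_pos_of_le hq0 hqC]
  rcases hqC.lt_or_eq with hqC | rfl
  · rw [tp_of_pos_of_le (by omega : 0 < q + 1) hqC]
    push_cast
    linarith
  · rw [tp_succ_self, T_eq_mul_TSC hC.ne']
    linarith

lemma qm_eq_of_tp_le_of_lt {m j : ℕ} {t : ℝ} (hmono : MonotoneOn (tp N C Δt m) (Set.Iic C))
    (hj : j ≤ C) (h1 : tp N C Δt m j ≤ t) (h2 : t < tp N C Δt m (j + 1)) :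
    qm N C Δt m t = j := by
  have hfilter : (Finset.range (C + 1)).filter (fun q => tp N C Δt m q ≤ t)
      = Finset.range (j + 1) := by
    ext q
    simp only [Finset.mem_filter, Finset.mem_range]
    constructor
    · rintro ⟨hqC, hqt⟩
      by_contra! hjq
      exact (h2.trans_le (hmono (Set.mem_Iic.2 (by omega)) (Set.mem_Iic.2 (by omega))
        (by omega))).not_ge hqt
    · intro hq
      exact ⟨by omega, (hmono (Set.mem_Iic.2 (by omega)) hj (by omega)).trans h1⟩
  simp [qm, hfilter]

lemma phi_of_tp_le_of_lt {c₂ : ℝ} {m j : ℕ} {t : ℝ}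
    (hmono : MonotoneOn (tp N C Δt m) (Set.Iic (C + 1))) (hj : j ≤ C)
    (h1 : tp N C Δt m j ≤ t) (h2 : t < tp N C Δt m (j + 1)) :
    phi N C Δt c₂ m t = Complex.exp (2 * Real.pi * Complex.I *
      ((c₂ * (m : ℝ) ^ 2 + ctil N C Δt * t ^ 2 + ((m : ℝ) / T N Δt) * t
        - (j : ℝ) * t / Δt : ℝ) : ℂ)) := by
  have h0 : 0 ≤ t := by
    simpa [tp_zero] using (hmono (by simp) (Set.mem_Iic.2 (by omega)) j.zero_le).trans h1
  have hT : t < T N Δt := by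
    rw [← tp_succ_self m]
    exact h2.trans_le (hmono (Set.mem_Iic.2 (by omega)) Set.self_mem_Iic (by omega))
  rw [phi, if_pos ⟨h0, hT⟩,
    qm_eq_of_tp_le_of_lt (hmono.mono (Set.Iic_subset_Iic.2 C.le_succ)) hj h1 h2]
  norm_cast

lemma exp_mul_conj_exp_mul_exp (a b c : ℝ) :
    Complex.exp (2 * Real.pi * Complex.I * (a : ℂ)) *
        (starRingEnd ℂ) (Complex.exp (2 * Real.pi * Complex.I * (b : ℂ))) *
        Complex.exp (-(2 * Real.pi * Complex.I * (c : ℂ))) =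
      Complex.exp (2 * Real.pi * Complex.I * ((a - b - c : ℝ) : ℂ)) := by
  rw [← Complex.exp_conj, ← Complex.exp_add, ← Complex.exp_add]
  congr 1
  simp only [map_mul, Complex.conj_I, Complex.conj_ofReal, map_ofNat]
  push_cast
  ring

lemma integrand_eq_of_aligned {c₂ : ℝ} {m m₁ i k : ℕ} {k₀ : ℤ} {τ ν t : ℝ} (hΔt : Δt ≠ 0)
    (hτ : τ = (k₀ : ℝ) * Δt)
    (hν : ν = 2 * ctil N C Δt * τ - (k : ℝ) / Δt + ((m : ℝ) - (m₁ : ℝ)) / T N Δt)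
    (hmono : MonotoneOn (tp N C Δt m) (Set.Iic (C + 1)))
    (hmono₁ : MonotoneOn (tp N C Δt m₁) (Set.Iic (C + 1))) (hik : i + k ≤ C)
    (h1 : tp N C Δt m (i + k) ≤ t) (h2 : t < tp N C Δt m (i + k + 1))
    (h3 : tp N C Δt m₁ i ≤ t - τ) (h4 : t - τ < tp N C Δt m₁ (i + 1)) :
    phi N C Δt c₂ m t * (starRingEnd ℂ) (phi N C Δt c₂ m₁ (t - τ)) *
        Complex.exp (-(2 * Real.pi * Complex.I * ((ν * t : ℝ) : ℂ))) =
      Complex.exp (2 * Real.pi * Complex.I *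
        ((c₂ * ((m : ℝ) ^ 2 - (m₁ : ℝ) ^ 2) + ((m₁ : ℝ) / T N Δt) * τ
          - ctil N C Δt * τ ^ 2 : ℝ) : ℂ)) := by
  rw [phi_of_tp_le_of_lt hmono hik h1 h2, phi_of_tp_le_of_lt hmono₁ (by omega) h3 h4,
    exp_mul_conj_exp_mul_exp]
  refine Complex.exp_eq_exp_iff_exists_int.2 ⟨-(i * k₀), ?_⟩
  have hΔt' : (Δt : ℂ) ≠ 0 := by exact_mod_cast hΔt
  subst hτ hν
  push_cast
  field_simp
  ring

lemma tp_add_le_tp_add {m m₁ i k : ℕ} {τ : ℝ} (hΔt : 0 ≤ Δt) (hmm₁ : m₁ ≤ m)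
    (hik : i + k ≤ C) (hτ : k * TSC N C Δt ≤ τ) :
    tp N C Δt m (i + k) ≤ tp N C Δt m₁ i + τ := by
  have hshift : (m₁ : ℝ) * Δt / C ≤ m * Δt / C := by gcongr
  have hshift₀ : 0 ≤ (m₁ : ℝ) * Δt / C := by positivity
  rcases Nat.eq_zero_or_pos i with rfl | hi
  · rcases Nat.eq_zero_or_pos k with rfl | hk
    · simpa [tp_zero] using hτ
    · rw [zero_add, tp_of_pos_of_le hk (by omega), tp_zero]
      linarith
  · rw [tp_of_pos_of_le (by omega) hik, tp_of_pos_of_le hi (by omega)]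
    push_cast
    linarith

lemma T_le_tp_add {m₁ k : ℕ} {τ : ℝ} (hkC : k ≤ C) (h1 : 0 ≤ tp N C Δt m₁ 1)
    (hτ : k * TSC N C Δt ≤ τ) : T N Δt ≤ tp N C Δt m₁ (C - k + 1) + τ := by
  rcases Nat.eq_zero_or_pos k with rfl | hk
  · simp only [CharP.cast_eq_zero, zero_mul] at hτ
    simpa [tp_succ_self] using hτ
  · have hC : 0 < C := hk.trans_le hkC
    rw [tp_of_pos_of_le one_pos hC] at h1
    rw [tp_of_pos_of_le (by omega) (by omega), T_eq_mul_TSC hC.ne']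
    push_cast [Nat.cast_sub hkC]
    linarith

theorem caf_aligned_integrand_constant_general
    (N C : ℕ)
    (Δt : ℝ) (hΔt : 0 < Δt) (c₂ : ℝ) (m m₁ k : ℕ) (hm : m < N) (hm₁ : m₁ < N)
    (hmm₁ : m₁ < m) (hk : k < C)
    (k₀ : ℤ) (τ : ℝ) (hτ : τ = (k₀ : ℝ) * Δt)
    (hτ1 : (k : ℝ) * TSC N C Δt ≤ τ)
    (ν : ℝ) (hν : ν = 2 * ctil N C Δt * τ - (k : ℝ) / Δt + ((m : ℝ) - (m₁ : ℝ)) / T N Δt) :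
    (∀ i : ℕ, i ≤ C - k - 1 → ∀ t : ℝ,
        tp N C Δt m₁ i + τ ≤ t → t < tp N C Δt m (i + k + 1) →
        phi N C Δt c₂ m t * (starRingEnd ℂ) (phi N C Δt c₂ m₁ (t - τ)) *
            Complex.exp (-(2 * Real.pi * Complex.I * ((ν * t : ℝ) : ℂ))) =
          Complex.exp (2 * Real.pi * Complex.I *
            ((c₂ * ((m : ℝ) ^ 2 - (m₁ : ℝ) ^ 2) + ((m₁ : ℝ) / T N Δt) * τ
              - ctil N C Δt * τ ^ 2 : ℝ) : ℂ))) ∧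
      (∀ t : ℝ, tp N C Δt m₁ (C - k) + τ ≤ t → t < T N Δt →
        phi N C Δt c₂ m t * (starRingEnd ℂ) (phi N C Δt c₂ m₁ (t - τ)) *
            Complex.exp (-(2 * Real.pi * Complex.I * ((ν * t : ℝ) : ℂ))) =
          Complex.exp (2 * Real.pi * Complex.I *
            ((c₂ * ((m : ℝ) ^ 2 - (m₁ : ℝ) ^ 2) + ((m₁ : ℝ) / T N Δt) * τ
              - ctil N C Δt * τ ^ 2 : ℝ) : ℂ))) := by
  have h1 : 0 ≤ tp N C Δt m₁ 1 := tp_one_nonneg hm₁.le hΔt.le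
  have hmono := tp_monotoneOn hΔt.le (tp_one_nonneg (C := C) hm.le hΔt.le)
  have hmono₁ := tp_monotoneOn hΔt.le h1
  have hshift : ∀ i, i + k ≤ C → tp N C Δt m (i + k) ≤ tp N C Δt m₁ i + τ :=
    fun i hi => tp_add_le_tp_add hΔt.le hmm₁.le hi hτ1
  refine ⟨fun i hi t ht1 ht2 => ?_, fun t ht1 ht2 => ?_⟩
  · have hnext := hshift (i + 1) (by omega)
    rw [Nat.add_right_comm] at hnext
    exact integrand_eq_of_aligned hΔt.ne' hτ hν hmono hmono₁ (by omega)
      ((hshift i (by omega)).trans ht1) ht2 (by linarith) (by linarith)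
  · have hlast : tp N C Δt m (C - k + k + 1) = T N Δt := by
      rw [Nat.sub_add_cancel hk.le, tp_succ_self]
    exact integrand_eq_of_aligned hΔt.ne' hτ hν hmono hmono₁ (by omega)
      ((hshift (C - k) (by omega)).trans ht1) (hlast ▸ ht2) (by linarith)
      (by linarith [T_le_tp_add hk.le h1 hτ1])

/-- Cross-ambiguity pulse location: when `τ = k₀·Δt` lies in the `k`-th subchirp window
and `ν = 2·c̃₁·τ − k/Δt + (m − m₁)/T`, the cross-ambiguity integrand is the constant
`exp(2πi·(c₂·(m² − m₁²) + (m₁/T)·τ − c̃₁·τ²))` on every frequency-aligned sub-interval;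
hence the cross-ambiguity function has a pulse at `(τ, 2·c̃₁·τ − k/Δt + δ_f)`, shifted
along the Doppler dimension by exactly the frequency difference `δ_f = (m − m₁)/T`. -/
theorem caf_aligned_integrand_constant
    (N C : ℕ) (hN : 0 < N) (hNeven : Even N) (hC : 0 < C)
    (Δt : ℝ) (hΔt : 0 < Δt) (c₂ : ℝ) (m m₁ k : ℕ) (hm : m < N) (hm₁ : m₁ < N)
    (hmm₁ : m₁ < m) (hk : k < C)
    (k₀ : ℤ) (τ : ℝ) (hτ : τ = (k₀ : ℝ) * Δt)
    (hτ1 : (k : ℝ) * TSC N C Δt ≤ τ)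
    (hτ2 : τ < (k : ℝ) * TSC N C Δt +
      min (TSC N C Δt - tp N C Δt m₁ 1) (tp N C Δt m 1))
    (ν : ℝ) (hν : ν = 2 * ctil N C Δt * τ - (k : ℝ) / Δt + ((m : ℝ) - (m₁ : ℝ)) / T N Δt) :
    (∀ i : ℕ, i ≤ C - k - 1 → ∀ t : ℝ,
        tp N C Δt m₁ i + τ ≤ t → t < tp N C Δt m (i + k + 1) →
        phi N C Δt c₂ m t * (starRingEnd ℂ) (phi N C Δt c₂ m₁ (t - τ)) *
            Complex.exp (-(2 * Real.pi * Complex.I * ((ν * t : ℝ) : ℂ))) =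
          Complex.exp (2 * Real.pi * Complex.I *
            ((c₂ * ((m : ℝ) ^ 2 - (m₁ : ℝ) ^ 2) + ((m₁ : ℝ) / T N Δt) * τ
              - ctil N C Δt * τ ^ 2 : ℝ) : ℂ))) ∧
      (∀ t : ℝ, tp N C Δt m₁ (C - k) + τ ≤ t → t < T N Δt →
        phi N C Δt c₂ m t * (starRingEnd ℂ) (phi N C Δt c₂ m₁ (t - τ)) *
            Complex.exp (-(2 * Real.pi * Complex.I * ((ν * t : ℝ) : ℂ))) =
          Complex.exp (2 * Real.pi * Complex.I *
            ((c₂ * ((m : ℝ) ^ 2 - (m₁ : ℝ) ^ 2) + ((m₁ : ℝ) / T N Δt) * τ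
              - ctil N C Δt * τ ^ 2 : ℝ) : ℂ))) :=
  caf_aligned_integrand_constant_general N C Δt hΔt c₂ m m₁ k hm hm₁ hmm₁ hk k₀ τ hτ hτ1 ν hν

end AFDM
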